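/- arXiv:2206.02774 — 5 statements merged into one kernel-verified Lean document; each statement's English description precedes it below -/
import Mathlib

section
/- Let f : [0,∞) → ℝ be convex with f(1) = 0, twice differentiable on an interval (r,R) ⊂ (0,∞), and suppose there exist constants a, A ∈ ℝ such that a ≤ t·f''(t) ≤ A for all t ∈ (r,R). Let μ and ν be probability measures on ℝ^d, absolutely continuous with respect to Lebesgue measure, whose density ratio μ(x)/ν(x) takes values in (r,R) for a.e. x. Then a·KL(μ|ν) ≤ I_f(μ|ν) ≤ A·KL(μ|ν), where I_f(μ|ν) = ∫ f(μ(x)/ν(x)) ν(x) dx and KL(μ|ν) = ∫ log(μ(x)/ν(x)) μ(x) dx. -/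
open MeasureTheory Set

/-!
On `(r, R)` the function `φ t = f t - a t log t` has `φ'' = f'' - a / t ≥ 0`, so it is convex
there and lies above its tangent at `1`, which belongs to `(r, R)` because `p` and `q` have the
same mass. Integrating the tangent inequality at `t = p / q` against `q` gives `I_φ ≥ 0`, that is
`I_f ≥ a KL`. The upper bound is the lower bound for `-f`.
-/

lemma ConvexOn.mul_sub_le_sub_of_hasDerivAt {S : Set ℝ} {f : ℝ → ℝ} {f' x y : ℝ}
    (hf : ConvexOn ℝ S f) (hx : x ∈ S) (hy : y ∈ S) (hf' : HasDerivAt f f' x) :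
    f' * (y - x) ≤ f y - f x := by
  rcases lt_trichotomy x y with hxy | rfl | hxy
  · have := hf.le_slope_of_hasDerivAt hx hy hxy hf'
    rwa [slope_def_field, le_div_iff₀ (sub_pos.2 hxy)] at this
  · simp
  · have := hf.slope_le_of_hasDerivAt hy hx hxy hf'
    rw [slope_def_field, div_le_iff₀ (sub_pos.2 hxy)] at this
    linarith

lemma convexOn_of_hasDerivAt2_nonneg {S : Set ℝ} (hS : Convex ℝ S) (hS' : IsOpen S)
    {f f' f'' : ℝ → ℝ} (hderiv : ∀ t ∈ S, HasDerivAt f (f' t) t ∧ HasDerivAt f' (f'' t) t)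
    (hnonneg : ∀ t ∈ S, 0 ≤ f'' t) : ConvexOn ℝ S f := by
  refine convexOn_of_hasDerivWithinAt2_nonneg (f' := f') (f'' := f'') hS
    (fun t ht => (hderiv t ht).1.continuousAt.continuousWithinAt) ?_ ?_ ?_ <;>
    rw [hS'.interior_eq]
  · exact fun t ht => (hderiv t ht).1.hasDerivWithinAt
  · exact fun t ht => (hderiv t ht).2.hasDerivWithinAt
  · exact hnonneg

section

variable {α : Type*} [MeasurableSpace α] {μ : Measure α}

lemma integral_lt_integral_of_ae_lt [NeZero μ] {f g : α → ℝ} (hf : Integrable f μ)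
    (hg : Integrable g μ) (hfg : ∀ᵐ x ∂μ, f x < g x) : ∫ x, f x ∂μ < ∫ x, g x ∂μ := by
  have hsupport : (Function.support fun x => g x - f x) =ᵐ[μ] univ :=
    ae_eq_univ.2 <| mem_ae_iff.1 <| hfg.mono fun x hx => (sub_pos.2 hx).ne'
  have hpos : 0 < ∫ x, (g x - f x) ∂μ := by
    rw [integral_pos_iff_support_of_nonneg_ae (hfg.mono fun x hx => (sub_pos.2 hx).le)
      (hg.sub hf), measure_congr hsupport]
    exact Measure.measure_univ_pos.2 (NeZero.ne μ)
  rwa [integral_sub hg hf, sub_pos] at hpos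

variable {p q : α → ℝ} {r R : ℝ}

lemma ae_pos_of_ae_div_mem_Ioo (hr : 0 < r) (hq0 : ∀ᵐ x ∂μ, 0 ≤ q x)
    (hratio : ∀ᵐ x ∂μ, p x / q x ∈ Ioo r R) : ∀ᵐ x ∂μ, 0 < q x := by
  filter_upwards [hq0, hratio] with x hqx hx
  refine hqx.lt_of_ne' fun hq => ?_
  rw [hq, div_zero] at hx
  exact hr.not_gt hx.1

lemma one_mem_Ioo_of_ae_div_mem (hr : 0 < r) (hp : Integrable p μ) (hq : Integrable q μ)
    (hq0 : ∀ᵐ x ∂μ, 0 ≤ q x) (hp1 : ∫ x, p x ∂μ = 1) (hq1 : ∫ x, q x ∂μ = 1)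
    (hratio : ∀ᵐ x ∂μ, p x / q x ∈ Ioo r R) : (1 : ℝ) ∈ Ioo r R := by
  have : NeZero μ := ⟨by rintro rfl; simp at hq1⟩
  have hqpos := ae_pos_of_ae_div_mem_Ioo hr hq0 hratio
  constructor
  · have := integral_lt_integral_of_ae_lt (hq.const_mul r) hp <| by
      filter_upwards [hqpos, hratio] with x hqx hx
      exact (lt_div_iff₀ hqx).1 hx.1
    rwa [integral_const_mul, hq1, hp1, mul_one] at this
  · have := integral_lt_integral_of_ae_lt hp (hq.const_mul R) <| by
      filter_upwards [hqpos, hratio] with x hqx hx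
      exact (div_lt_iff₀ hqx).1 hx.2
    rwa [integral_const_mul, hq1, hp1, mul_one] at this

lemma integral_comp_div_mul_nonneg {S : Set ℝ} {φ : ℝ → ℝ} {c : ℝ} (hφ : ConvexOn ℝ S φ)
    (h1 : 1 ∈ S) (hφ1 : φ 1 = 0) (hφ' : HasDerivAt φ c 1) (hqpos : ∀ᵐ x ∂μ, 0 < q x)
    (hratio : ∀ᵐ x ∂μ, p x / q x ∈ S) (hp : Integrable p μ) (hq : Integrable q μ)
    (hpq : ∫ x, p x ∂μ = ∫ x, q x ∂μ) (hint : Integrable (fun x => φ (p x / q x) * q x) μ) :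
    0 ≤ ∫ x, φ (p x / q x) * q x ∂μ := by
  have htangent : ∀ᵐ x ∂μ, c * (p x - q x) ≤ φ (p x / q x) * q x := by
    filter_upwards [hqpos, hratio] with x hqx hx
    have := mul_le_mul_of_nonneg_right (hφ.mul_sub_le_sub_of_hasDerivAt h1 hx hφ') hqx.le
    rwa [hφ1, sub_zero, mul_assoc, sub_mul, div_mul_cancel₀ _ hqx.ne', one_mul] at this
  calc 0 = ∫ x, c * (p x - q x) ∂μ := by
        rw [integral_const_mul, integral_sub hp hq, hpq, sub_self, mul_zero]
    _ ≤ _ := integral_mono_ae ((hp.sub hq).const_mul c) hint htangent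

theorem mul_integral_log_le_integral_of_le_mul_deriv2 {f f' f'' : ℝ → ℝ} {a : ℝ} (hr : 0 < r)
    (hf1 : f 1 = 0) (hderiv : ∀ t ∈ Ioo r R, HasDerivAt f (f' t) t ∧ HasDerivAt f' (f'' t) t)
    (ha : ∀ t ∈ Ioo r R, a ≤ t * f'' t) (hq0 : ∀ᵐ x ∂μ, 0 ≤ q x) (hp1 : ∫ x, p x ∂μ = 1)
    (hq1 : ∫ x, q x ∂μ = 1) (hratio : ∀ᵐ x ∂μ, p x / q x ∈ Ioo r R)
    (hIf : Integrable (fun x => f (p x / q x) * q x) μ)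
    (hIkl : Integrable (fun x => Real.log (p x / q x) * p x) μ) :
    a * ∫ x, Real.log (p x / q x) * p x ∂μ ≤ ∫ x, f (p x / q x) * q x ∂μ := by
  have hp : Integrable p μ := .of_integral_ne_zero (by simp [hp1])
  have hq : Integrable q μ := .of_integral_ne_zero (by simp [hq1])
  have h1 := one_mem_Ioo_of_ae_div_mem hr hp hq hq0 hp1 hq1 hratio
  have hqpos := ae_pos_of_ae_div_mem_Ioo hr hq0 hratio
  set φ : ℝ → ℝ := fun t => f t - a * (t * Real.log t)
  have hφ : ∀ t ∈ Ioo r R, HasDerivAt φ (f' t - a * (Real.log t + 1)) t ∧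
      HasDerivAt (fun t => f' t - a * (Real.log t + 1)) (f'' t - a * t⁻¹) t := by
    intro t ht
    have ht0 : t ≠ 0 := (hr.trans ht.1).ne'
    exact ⟨(hderiv t ht).1.sub ((Real.hasDerivAt_mul_log ht0).const_mul a),
      (hderiv t ht).2.sub (((Real.hasDerivAt_log ht0).add_const 1).const_mul a)⟩
  have hconv : ConvexOn ℝ (Ioo r R) φ := by
    refine convexOn_of_hasDerivAt2_nonneg (convex_Ioo r R) isOpen_Ioo hφ fun t ht => ?_
    rw [sub_nonneg, ← div_eq_mul_inv, div_le_iff₀ (hr.trans ht.1)]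
    linarith [ha t ht]
  have heq : (fun x => φ (p x / q x) * q x) =ᵐ[μ]
      fun x => f (p x / q x) * q x - a * (Real.log (p x / q x) * p x) := by
    filter_upwards [hqpos] with x hqx
    simp only [φ]
    field_simp
  have := integral_comp_div_mul_nonneg hconv h1 (by simp [φ, hf1]) (hφ 1 h1).1 hqpos hratio hp hq
    (hp1.trans hq1.symm) ((hIf.sub (hIkl.const_mul a)).congr heq.symm)
  rw [integral_congr_ae heq, integral_sub hIf (hIkl.const_mul a), integral_const_mul] at this
  linarith

end

theorem stmt_0_general {d : ℕ} (f f' f'' : ℝ → ℝ) (r R a A : ℝ)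
    (hr : 0 < r) (hf1 : f 1 = 0)
    (hderiv : ∀ t ∈ Ioo r R, HasDerivAt f (f' t) t ∧ HasDerivAt f' (f'' t) t)
    (haA : ∀ t ∈ Ioo r R, a ≤ t * f'' t ∧ t * f'' t ≤ A)
    (p q : (Fin d → ℝ) → ℝ)
    (hq0 : ∀ x, 0 ≤ q x)
    (hp1 : ∫ x, p x = 1) (hq1 : ∫ x, q x = 1)
    (hratio : ∀ᵐ x : (Fin d → ℝ), p x / q x ∈ Ioo r R)
    (hIf : Integrable (fun x => f (p x / q x) * q x))
    (hIkl : Integrable (fun x => Real.log (p x / q x) * p x)) :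
    a * ∫ x, Real.log (p x / q x) * p x ≤ ∫ x, f (p x / q x) * q x ∧
      ∫ x, f (p x / q x) * q x ≤ A * ∫ x, Real.log (p x / q x) * p x := by
  refine ⟨mul_integral_log_le_integral_of_le_mul_deriv2 hr hf1 hderiv (fun t ht => (haA t ht).1)
    (ae_of_all _ hq0) hp1 hq1 hratio hIf hIkl, ?_⟩
  have hneg := mul_integral_log_le_integral_of_le_mul_deriv2 (f := fun t => -f t)
    (f' := fun t => -f' t) (f'' := fun t => -f'' t) (a := -A) hr (by simp [hf1])
    (fun t ht => ⟨(hderiv t ht).1.neg, (hderiv t ht).2.neg⟩)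
    (fun t ht => by linarith [(haA t ht).2]) (ae_of_all _ hq0) hp1 hq1 hratio (by simp only [neg_mul]; exact hIf.neg) hIkl
  simp only [neg_mul, integral_neg] at hneg
  linarith

/-- f-divergence comparison with KL under bounds on t·f''(t). -/
theorem stmt_0 {d : ℕ} (f f' f'' : ℝ → ℝ) (r R a A : ℝ)
    (hr : 0 < r) (hrR : r < R)
    (hconv : ConvexOn ℝ (Ici (0:ℝ)) f) (hf1 : f 1 = 0)
    (hderiv : ∀ t ∈ Ioo r R, HasDerivAt f (f' t) t ∧ HasDerivAt f' (f'' t) t)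
    (haA : ∀ t ∈ Ioo r R, a ≤ t * f'' t ∧ t * f'' t ≤ A)
    (p q : (Fin d → ℝ) → ℝ)
    (hpm : Measurable p) (hqm : Measurable q)
    (hp0 : ∀ x, 0 ≤ p x) (hq0 : ∀ x, 0 ≤ q x)
    (hp1 : ∫ x, p x = 1) (hq1 : ∫ x, q x = 1)
    (hratio : ∀ᵐ x : (Fin d → ℝ), p x / q x ∈ Ioo r R)
    (hIf : Integrable (fun x => f (p x / q x) * q x))
    (hIkl : Integrable (fun x => Real.log (p x / q x) * p x)) :
    a * ∫ x, Real.log (p x / q x) * p x ≤ ∫ x, f (p x / q x) * q x ∧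
      ∫ x, f (p x / q x) * q x ≤ A * ∫ x, Real.log (p x / q x) * p x :=
  stmt_0_general f f' f'' r R a A hr hf1 hderiv haA p q hq0 hp1 hq1 hratio hIf hIkl
end

section
/- Let m and m' be absolutely continuous probability measures on ℝ^d such that there exist constants r, R > 0 with r ≤ m(x)/m'(x) ≤ R for all x. Then KL(m'|m) ≤ (1/r)·KL(m|m'). -/
open MeasureTheory Set

/-!
With `t = m / m'`, the two divergences are `∫ t log t · m'` and `-∫ log t · m'`, and
`∫ (t - 1) m' = 0`. Since `r ≤ t` and (integrating `r m' ≤ m`) `r ≤ 1`, the elementary inequality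
`(1 + r)(t - 1) ≤ (t + r) log t` for `t ≥ r` integrates to `0 ≤ ∫ (t + r) log t · m'`, which is the
claim. That inequality holds because `φ t = (t + r) log t - (1 + r)(t - 1)` vanishes at `1`, where
`φ'` changes sign from `≤ 0` on `[r, 1]` to `≥ 0` on `[1, ∞)`.
-/

namespace Real

theorem hasDerivAt_add_mul_log_sub (r : ℝ) {s : ℝ} (hs : 0 < s) :
    HasDerivAt (fun t => (t + r) * log t - (1 + r) * (t - 1)) (log s + r / s - r) s := by
  have h := (((hasDerivAt_id s).add_const r).mul (hasDerivAt_log hs.ne')).sub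
    (((hasDerivAt_id s).sub_const 1).const_mul (1 + r))
  exact h.congr_deriv (by simp only [id]; field_simp; ring)

theorem one_add_mul_sub_one_le_add_mul_log {r t : ℝ} (hr : r ≤ 1) (ht : 0 < t) (hrt : r ≤ t) :
    (1 + r) * (t - 1) ≤ (t + r) * log t := by
  set φ : ℝ → ℝ := fun t => (t + r) * log t - (1 + r) * (t - 1)
  have hφ : ∀ s, 0 < s → HasDerivAt φ (log s + r / s - r) s := fun s hs =>
    hasDerivAt_add_mul_log_sub r hs
  have hcont : ∀ a b, 0 < a → ContinuousOn φ (Icc a b) := fun a b ha s hs =>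
    (hφ s (ha.trans_le hs.1)).continuousAt.continuousWithinAt
  suffices φ 1 ≤ φ t by simpa [φ] using this
  rcases le_total t 1 with ht1 | ht1
  · refine antitoneOn_of_hasDerivWithinAt_nonpos (convex_Icc t 1) (hcont t 1 ht)
      (fun s hs => (hφ s (ht.trans_le (interior_subset hs).1)).hasDerivWithinAt) ?_
      ⟨le_rfl, ht1⟩ ⟨ht1, le_rfl⟩ ht1
    rw [interior_Icc]
    rintro s ⟨hts, hs1⟩
    have hs : 0 < s := ht.trans hts
    -- `log s ≤ s - 1` turns `φ' s` into `(s - 1) (s - r) / s`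
    have hlog := log_le_sub_one_of_pos hs
    have hrs : r / s - r = r * (1 - s) / s := by field_simp
    have : r * (1 - s) / s ≤ 1 - s := by
      rw [div_le_iff₀ hs]; nlinarith
    linarith
  · refine monotoneOn_of_hasDerivWithinAt_nonneg (convex_Icc 1 t) (hcont 1 t one_pos)
      (fun s hs => (hφ s (one_pos.trans_le (interior_subset hs).1)).hasDerivWithinAt) ?_
      ⟨le_rfl, ht1⟩ ⟨ht1, le_rfl⟩ ht1
    rw [interior_Icc]
    rintro s ⟨h1s, -⟩
    have hs : 0 < s := one_pos.trans h1s
    -- `1 - 1/s ≤ log s` turns `φ' s` into `(1 - r) (1 - 1/s)`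
    have hlog := one_sub_inv_le_log_of_pos hs
    have : 0 ≤ (1 - r) * (1 - s⁻¹) :=
      mul_nonneg (by linarith) (by linarith [inv_lt_one_of_one_lt₀ h1s])
    rw [div_eq_mul_inv]
    nlinarith

theorem mul_log_div_mul_le {r a b : ℝ} (hr : r ≤ 1) (ha : 0 < a) (hb : 0 < b)
    (hab : r ≤ a / b) :
    r * (log (b / a) * b) ≤ log (a / b) * a - (1 + r) * (a - b) := by
  have key := mul_le_mul_of_nonneg_right
    (one_add_mul_sub_one_le_add_mul_log hr (div_pos ha hb) hab) hb.le
  rw [← inv_div a b, log_inv]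
  have e1 : (1 + r) * (a / b - 1) * b = (1 + r) * (a - b) := by field_simp
  have e2 : (a / b + r) * log (a / b) * b = log (a / b) * a + r * (log (a / b) * b) := by
    field_simp
  linarith

end Real

namespace MeasureTheory

variable {α : Type*} [MeasurableSpace α] {μ : Measure α}

theorem Integrable.log_mul_of_mem_Icc {f g : α → ℝ} {a b : ℝ} (hg : Integrable g μ)
    (hf : AEMeasurable f μ) (ha : 0 < a) (hfab : ∀ x, f x ∈ Icc a b) :
    Integrable (fun x => Real.log (f x) * g x) μ := by
  refine hg.bdd_mul (c := max |Real.log a| |Real.log b|)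
    (Real.measurable_log.comp_aemeasurable hf).aestronglyMeasurable (ae_of_all _ fun x => ?_)
  obtain ⟨hafx, hfxb⟩ := hfab x
  rw [Real.norm_eq_abs]
  exact abs_le_max_abs_abs (Real.log_le_log ha hafx) (Real.log_le_log (ha.trans_le hafx) hfxb)

theorem integral_log_div_mul_le_of_div_mem_Icc {p q : α → ℝ} {r R : ℝ} (hr : 0 < r)
    (hq0 : ∀ x, 0 ≤ q x) (hp1 : ∫ x, p x ∂μ = 1) (hq1 : ∫ x, q x ∂μ = 1)
    (hratio : ∀ x, p x / q x ∈ Icc r R) :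
    ∫ x, Real.log (q x / p x) * q x ∂μ ≤ (1 / r) * ∫ x, Real.log (p x / q x) * p x ∂μ := by
  have hq_pos : ∀ x, 0 < q x := fun x => (hq0 x).lt_of_ne fun h => by
    have := (hratio x).1
    rw [← h, div_zero] at this
    linarith
  have hrqp : ∀ x, r * q x ≤ p x := fun x => (le_div_iff₀ (hq_pos x)).1 (hratio x).1
  have hp_pos : ∀ x, 0 < p x := fun x => (mul_pos hr (hq_pos x)).trans_le (hrqp x)
  have hp : Integrable p μ := Integrable.of_integral_ne_zero (by simp [hp1])
  have hq : Integrable q μ := Integrable.of_integral_ne_zero (by simp [hq1])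
  have hr1 : r ≤ 1 := by
    simpa [integral_const_mul, hp1, hq1] using integral_mono (hq.const_mul r) hp hrqp
  have hpq_meas : AEMeasurable (fun x => p x / q x) μ := hp.aemeasurable.div hq.aemeasurable
  have hpq : Integrable (fun x => p x - q x) μ := hp.sub hq
  have hKLp : Integrable (fun x => Real.log (p x / q x) * p x) μ :=
    hp.log_mul_of_mem_Icc hpq_meas hr hratio
  have hKLq : Integrable (fun x => Real.log (q x / p x) * q x) μ := by
    refine ((hq.log_mul_of_mem_Icc hpq_meas hr hratio).neg).congr (ae_of_all _ fun x => ?_)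
    simp only [Pi.neg_apply, ← inv_div (p x), Real.log_inv, neg_mul]
  rw [one_div, le_inv_mul_iff₀ hr, ← integral_const_mul]
  calc ∫ x, r * (Real.log (q x / p x) * q x) ∂μ
      ≤ ∫ x, (Real.log (p x / q x) * p x - (1 + r) * (p x - q x)) ∂μ :=
        integral_mono (hKLq.const_mul r) (hKLp.sub (hpq.const_mul _)) fun x =>
          Real.mul_log_div_mul_le hr1 (hp_pos x) (hq_pos x) (hratio x).1
    _ = ∫ x, Real.log (p x / q x) * p x ∂μ := by
        rw [integral_sub hKLp (hpq.const_mul _), integral_const_mul,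
          integral_sub hp hq, hp1, hq1]
        ring

end MeasureTheory

theorem stmt_1_general {d : ℕ} (m m' : (Fin d → ℝ) → ℝ) (r R : ℝ)
    (hr : 0 < r)
    (hm'0 : ∀ x, 0 ≤ m' x)
    (hm1 : ∫ x, m x = 1) (hm'1 : ∫ x, m' x = 1)
    (hratio : ∀ x, r ≤ m x / m' x ∧ m x / m' x ≤ R) :
    ∫ x, Real.log (m' x / m x) * m' x ≤ (1 / r) * ∫ x, Real.log (m x / m' x) * m x :=
  integral_log_div_mul_le_of_div_mem_Icc hr hm'0 hm1 hm'1 hratio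

/-- KL(m'|m) ≤ (1/r)·KL(m|m') under density ratio bounds. -/
theorem stmt_1 {d : ℕ} (m m' : (Fin d → ℝ) → ℝ) (r R : ℝ)
    (hr : 0 < r) (hR : 0 < R)
    (hm : Measurable m) (hm' : Measurable m')
    (hm0 : ∀ x, 0 ≤ m x) (hm'0 : ∀ x, 0 ≤ m' x)
    (hm1 : ∫ x, m x = 1) (hm'1 : ∫ x, m' x = 1)
    (hratio : ∀ x, r ≤ m x / m' x ∧ m x / m' x ≤ R) :
    ∫ x, Real.log (m' x / m x) * m' x ≤ (1 / r) * ∫ x, Real.log (m x / m' x) * m x :=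
  stmt_1_general m m' r R hr hm'0 hm1 hm'1 hratio
end

section
/- Let m and m' be absolutely continuous probability measures on ℝ^d such that there exist constants r, R > 0 with r ≤ m(x)/m'(x) ≤ R for all x. Then χ²(m|m') ≤ 2R·KL(m|m'), where χ²(m|m') = ∫ (m(x)/m'(x) − 1)² m'(x) dx. -/
open MeasureTheory Set

/-!
With `t = m x / m' x ∈ [r, R]` and `klFun t = t log t + 1 - t`, pointwise
`(t - 1)² ≤ 2 max 1 t · klFun t ≤ 2R · klFun t`: for `t ≤ 1` this is `sinh (log t) ≤ log t`,
for `t ≥ 1` it is the second-order bound `x + x²/2 ≤ -log (1 - x)` at `x = 1 - 1/t`.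
Integrating against `m'` gives the claim, because `∫ klFun (m/m') m' = KL(m|m')` when both
densities have mass one, which also forces `R ≥ 1`.
-/

open InformationTheory Real

lemma Real.add_sq_div_two_le_neg_log_one_sub {x : ℝ} (h0 : 0 ≤ x) (h1 : x < 1) :
    x + x ^ 2 / 2 ≤ -log (1 - x) := by
  have hsum := hasSum_pow_div_log_of_abs_lt_one (abs_lt.mpr ⟨by linarith, h1⟩)
  have := sum_le_hasSum (Finset.range 2) (fun n _ => by positivity) hsum
  norm_num [Finset.sum_range_succ] at this
  linarith

lemma sq_sub_one_le_two_mul_klFun_of_le_one {t : ℝ} (h0 : 0 < t) (h1 : t ≤ 1) :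
    (t - 1) ^ 2 ≤ 2 * klFun t := by
  have hlog : (t - t⁻¹) / 2 ≤ log t := by
    rw [← sinh_log h0]
    exact sinh_le_self_iff.mpr (log_nonpos h0.le h1)
  have : t * t⁻¹ = 1 := mul_inv_cancel₀ h0.ne'
  rw [klFun_apply]
  nlinarith [mul_le_mul_of_nonneg_left hlog h0.le]

lemma sq_sub_one_le_two_mul_mul_klFun_of_one_le {t : ℝ} (h1 : 1 ≤ t) :
    (t - 1) ^ 2 ≤ 2 * t * klFun t := by
  have h0 : 0 < t := by linarith
  have hlog := add_sq_div_two_le_neg_log_one_sub (x := 1 - t⁻¹)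
    (by simp [inv_le_one_of_one_le₀ h1]) (by simpa using h0)
  rw [sub_sub_cancel, log_inv, neg_neg] at hlog
  have : t * t⁻¹ = 1 := mul_inv_cancel₀ h0.ne'
  rw [klFun_apply]
  nlinarith [mul_le_mul_of_nonneg_left hlog (sq_nonneg t)]

lemma sq_sub_one_le_two_mul_mul_klFun_of_le {t R : ℝ} (h0 : 0 < t) (htR : t ≤ R) (hR : 1 ≤ R) :
    (t - 1) ^ 2 ≤ 2 * R * klFun t := by
  have hkl := klFun_nonneg h0.le
  rcases le_total t 1 with h1 | h1
  · nlinarith [sq_sub_one_le_two_mul_klFun_of_le_one h0 h1]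
  · nlinarith [sq_sub_one_le_two_mul_mul_klFun_of_one_le h1]

section Densities

variable {α : Type*} [MeasurableSpace α] {μ : Measure α} {p q : α → ℝ}

lemma integrable_comp_div_mul {f : ℝ → ℝ} {r R : ℝ} (hf : Continuous f) (hp : Measurable p)
    (hq : Measurable q) (hq_int : Integrable q μ) (hpq : ∀ x, p x / q x ∈ Icc r R) :
    Integrable (fun x => f (p x / q x) * q x) μ := by
  obtain ⟨C, hC⟩ := isCompact_Icc.exists_bound_of_continuousOn hf.continuousOn
  exact hq_int.bdd_mul (hf.measurable.comp (hp.div hq)).aestronglyMeasurable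
    (.of_forall fun x => hC _ (hpq x))

lemma integral_klFun_div_mul (hq : ∀ x, q x ≠ 0) (hp_int : Integrable p μ)
    (hq_int : Integrable q μ) (hkl : Integrable (fun x => klFun (p x / q x) * q x) μ)
    (hpq : ∫ x, p x ∂μ = ∫ x, q x ∂μ) :
    ∫ x, klFun (p x / q x) * q x ∂μ = ∫ x, log (p x / q x) * p x ∂μ := by
  have hpt : ∀ x, log (p x / q x) * p x = klFun (p x / q x) * q x - (q x - p x) := by
    intro x
    rw [klFun_apply]
    field_simp [hq x]
    ring
  simp_rw [hpt]
  have hdiff : Integrable (fun x => q x - p x) μ := hq_int.sub hp_int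
  rw [integral_sub hkl hdiff, integral_sub hq_int hp_int, hpq, sub_self, sub_zero]

lemma one_le_of_le_mul_of_integral_eq_one {R : ℝ} (hp : ∫ x, p x ∂μ = 1) (hq : ∫ x, q x ∂μ = 1)
    (hpq : ∀ x, p x ≤ R * q x) : 1 ≤ R := by
  have hp_int : Integrable p μ := .of_integral_ne_zero (by simp [hp])
  have hq_int : Integrable q μ := .of_integral_ne_zero (by simp [hq])
  simpa [integral_const_mul, hp, hq] using integral_mono hp_int (hq_int.const_mul R) hpq

end Densities

theorem stmt_2_general {d : ℕ} (m m' : (Fin d → ℝ) → ℝ) (r R : ℝ)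
    (hr : 0 < r)
    (hm : Measurable m) (hm' : Measurable m')
    (hm'0 : ∀ x, 0 ≤ m' x)
    (hm1 : ∫ x, m x = 1) (hm'1 : ∫ x, m' x = 1)
    (hratio : ∀ x, r ≤ m x / m' x ∧ m x / m' x ≤ R) :
    ∫ x, (m x / m' x - 1) ^ 2 * m' x ≤ 2 * R * ∫ x, Real.log (m x / m' x) * m x := by
  have hm'pos : ∀ x, 0 < m' x := fun x =>
    (hm'0 x).lt_of_ne fun h => by simpa [← h, hr.not_ge] using (hratio x).1
  have hR : 1 ≤ R := one_le_of_le_mul_of_integral_eq_one hm1 hm'1 fun x => by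
    simpa [div_le_iff₀ (hm'pos x)] using (hratio x).2
  have hm_int : Integrable m := .of_integral_ne_zero (by simp [hm1])
  have hm'_int : Integrable m' := .of_integral_ne_zero (by simp [hm'1])
  have hchi_int := integrable_comp_div_mul (f := fun t => (t - 1) ^ 2) (by fun_prop)
    hm hm' hm'_int hratio
  have hkl_int := integrable_comp_div_mul continuous_klFun hm hm' hm'_int hratio
  have hpointwise : ∀ x, (m x / m' x - 1) ^ 2 * m' x ≤ 2 * R * (klFun (m x / m' x) * m' x) :=
    fun x => by
      rw [← mul_assoc]
      exact mul_le_mul_of_nonneg_right (sq_sub_one_le_two_mul_mul_klFun_of_le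
        (hr.trans_le (hratio x).1) (hratio x).2 hR) (hm'0 x)
  calc ∫ x, (m x / m' x - 1) ^ 2 * m' x
      ≤ ∫ x, 2 * R * (klFun (m x / m' x) * m' x) :=
        integral_mono hchi_int (hkl_int.const_mul _) hpointwise
    _ = 2 * R * ∫ x, Real.log (m x / m' x) * m x := by
        rw [integral_const_mul, integral_klFun_div_mul (fun x => (hm'pos x).ne') hm_int hm'_int
          hkl_int (hm1.trans hm'1.symm)]

/-- χ²(m|m') ≤ 2R·KL(m|m') under density ratio bounds. -/
theorem stmt_2 {d : ℕ} (m m' : (Fin d → ℝ) → ℝ) (r R : ℝ)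
    (hr : 0 < r) (hR : 0 < R)
    (hm : Measurable m) (hm' : Measurable m')
    (hm0 : ∀ x, 0 ≤ m x) (hm'0 : ∀ x, 0 ≤ m' x)
    (hm1 : ∫ x, m x = 1) (hm'1 : ∫ x, m' x = 1)
    (hratio : ∀ x, r ≤ m x / m' x ∧ m x / m' x ≤ R) :
    ∫ x, (m x / m' x - 1) ^ 2 * m' x ≤ 2 * R * ∫ x, Real.log (m x / m' x) * m x :=
  stmt_2_general m m' r R hr hm hm' hm'0 hm1 hm'1 hratio
end

section
/- Let G : P(ℝ^d) → ℝ be convex with a normalized flat derivative, minimized by an absolutely continuous measure m*, and satisfy the quadratic growth condition G(m') − G(m*) ≥ λ·KL(m'|m*) for all m' and some λ > 0. If m is an absolutely continuous probability measure with r ≤ m(x)/m*(x) ≤ R for all x (with r, R > 0), then G(m) − G(m*) ≤ (2R/(λr))·‖(δG/δm)(m,·)‖²_{L²(m)} (a flat Polyak–Łojasiewicz inequality). -/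
/-!
Write `t = m / m*` and `klFun t = t log t + 1 - t`, so that `∫ klFun t dm* = KL(m | m*)`.
Convexity bounds the gap by `∫ δG(m) (t - 1) dm*`. For `t ∈ [r, R]` the elementary inequality
`(t - 1)² ≤ 2 max(1, t) klFun t ≤ (2R/r) t klFun t` lets Young's inequality split the integrand
pointwise into `(R/(λr)) δG(m)² t + (λ/2) klFun t`. Integrating gives
`G(m) - G(m*) ≤ (R/(λr)) ‖δG(m)‖²_{L²(m)} + (λ/2) KL(m | m*)`, and quadratic growth bounds the
last term by half of the left-hand side.
-/

open MeasureTheory Set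

/-- A probability density on ℝ^d with respect to Lebesgue measure. -/
def IsProbDensity {d : ℕ} (p : (Fin d → ℝ) → ℝ) : Prop :=
  Measurable p ∧ (∀ x, 0 ≤ p x) ∧ ∫ x, p x = 1

open Real InformationTheory

lemma sq_sub_one_le_two_mul_klFun {t : ℝ} (ht : t ∈ Icc 0 1) :
    (t - 1) ^ 2 ≤ 2 * klFun t := by
  have hanti : AntitoneOn (fun x => 2 * klFun x - (x - 1) ^ 2) (Icc 0 1) := by
    refine antitoneOn_of_hasDerivWithinAt_nonpos (convex_Icc 0 1) (by fun_prop)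
      (f' := fun x => 2 * log x - 2 * (x - 1)) (fun x hx => ?_) (fun x hx => ?_) <;>
      rw [interior_Icc] at hx
    · have h := ((hasDerivAt_klFun hx.1.ne').const_mul 2).fun_sub
        (((hasDerivAt_id' x).sub_const 1).fun_pow 2)
      refine h.hasDerivWithinAt.congr_deriv ?_
      ring
    · linarith [log_le_sub_one_of_pos hx.1]
  have h := hanti ht ⟨zero_le_one, le_rfl⟩ ht.2
  simp only [klFun_one] at h
  linarith

lemma sq_sub_one_le_two_mul_self_mul_klFun {t : ℝ} (ht : 1 ≤ t) :
    (t - 1) ^ 2 ≤ 2 * t * klFun t := by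
  have hmono : MonotoneOn (fun x => 2 * x * klFun x - (x - 1) ^ 2) (Ici 1) := by
    refine monotoneOn_of_hasDerivWithinAt_nonneg (convex_Ici 1) (by fun_prop)
      (f' := fun x => 4 * klFun x) (fun x hx => ?_) (fun x hx => ?_) <;>
      rw [interior_Ici] at hx
    · have h := (((hasDerivAt_id' x).const_mul 2).fun_mul
        (hasDerivAt_klFun (by linarith [hx.out]))).fun_sub
        (((hasDerivAt_id' x).sub_const 1).fun_pow 2)
      refine h.hasDerivWithinAt.congr_deriv ?_
      simp only [klFun_apply]
      ring
    · exact mul_nonneg zero_le_four (klFun_nonneg (by linarith [hx.out]))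
  have h := hmono (le_refl (1 : ℝ)) ht ht
  simp only [klFun_one] at h
  linarith

lemma sq_sub_one_le_mul_klFun_of_mem_Icc {r R t : ℝ} (hr : 0 < r) (hR : 1 ≤ R)
    (ht : t ∈ Icc r R) : (t - 1) ^ 2 ≤ 2 * R / r * t * klFun t := by
  have ht0 : 0 < t := hr.trans_le ht.1
  have hk : 0 ≤ klFun t := klFun_nonneg ht0.le
  rcases le_total t 1 with ht1 | ht1
  · have hc : 2 ≤ 2 * R / r * t := by
      rw [div_mul_eq_mul_div, le_div_iff₀ hr]
      nlinarith [ht.1]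
    calc (t - 1) ^ 2 ≤ 2 * klFun t := sq_sub_one_le_two_mul_klFun ⟨ht0.le, ht1⟩
      _ ≤ 2 * R / r * t * klFun t := mul_le_mul_of_nonneg_right hc hk
  · have hc : 2 * t ≤ 2 * R / r * t := by
      rw [div_mul_eq_mul_div, le_div_iff₀ hr]
      nlinarith [ht.1, ht.2]
    calc (t - 1) ^ 2 ≤ 2 * t * klFun t := sq_sub_one_le_two_mul_self_mul_klFun ht1
      _ ≤ 2 * R / r * t * klFun t := mul_le_mul_of_nonneg_right hc hk

lemma mul_sub_one_le_of_sq_sub_one_le {A c t k b : ℝ} (hA : 0 < A) (ht : 0 < t)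
    (h : (t - 1) ^ 2 ≤ 4 * A * c * t * k) : b * (t - 1) ≤ A * b ^ 2 * t + c * k := by
  refine le_of_mul_le_mul_left ?_ (by positivity : 0 < 4 * A * t)
  nlinarith [sq_nonneg (2 * A * b * t - (t - 1))]

lemma mul_sub_mul_le_of_div_mem_Icc {lam r R p q b : ℝ} (hlam : 0 < lam) (hr : 0 < r)
    (hR : 1 ≤ R) (hq : 0 < q) (hpq : p / q ∈ Icc r R) :
    b * p - b * q ≤ R / (lam * r) * (b ^ 2 * p) + lam / 2 * (klFun (p / q) * q) := by
  set t := p / q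
  have hp : p = t * q := (div_mul_cancel₀ p hq.ne').symm
  have hcore : (t - 1) ^ 2 ≤ 4 * (R / (lam * r)) * (lam / 2) * t * klFun t := by
    have hc : 4 * (R / (lam * r)) * (lam / 2) = 2 * R / r := by
      field_simp
      ring
    rw [hc]
    exact sq_sub_one_le_mul_klFun_of_mem_Icc hr hR hpq
  have hyoung := mul_sub_one_le_of_sq_sub_one_le (b := b) (by positivity) (hr.trans_le hpq.1) hcore
  calc b * p - b * q = q * (b * (t - 1)) := by rw [hp]; ring
    _ ≤ q * (R / (lam * r) * b ^ 2 * t + lam / 2 * klFun t) :=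
      mul_le_mul_of_nonneg_left hyoung hq.le
    _ = R / (lam * r) * (b ^ 2 * p) + lam / 2 * (klFun t * q) := by rw [hp]; ring

section Integration

variable {α : Type*} [MeasurableSpace α] {μ : Measure α} {p q : α → ℝ}

lemma integrable_klFun_div_mul {r R : ℝ} (hp : AEStronglyMeasurable p μ) (hq : Integrable q μ)
    (hq0 : ∀ x, 0 ≤ q x) (hr : 0 ≤ r) (hpq : ∀ x, p x / q x ∈ Icc r R) :
    Integrable (fun x => klFun (p x / q x) * q x) μ := by
  refine Integrable.mono' (hq.const_mul (max (klFun r) (klFun R)))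
    ((continuous_klFun.comp_aestronglyMeasurable (hp.div₀ hq.1)).mul hq.1)
    (Filter.Eventually.of_forall fun x => ?_)
  have ht0 : 0 ≤ p x / q x := hr.trans (hpq x).1
  rw [Real.norm_of_nonneg (mul_nonneg (klFun_nonneg ht0) (hq0 x))]
  exact mul_le_mul_of_nonneg_right
    (convexOn_klFun.le_max_of_mem_Icc (show r ∈ Ici 0 from hr)
      (show R ∈ Ici 0 from ht0.trans (hpq x).2) (hpq x)) (hq0 x)

lemma integral_klFun_div_mul_eq (hp : Integrable p μ) (hq : Integrable q μ)
    (hpq : ∫ x, p x ∂μ = ∫ x, q x ∂μ) (hq0 : ∀ x, 0 < q x)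
    (hint : Integrable (fun x => klFun (p x / q x) * q x) μ) :
    ∫ x, klFun (p x / q x) * q x ∂μ = ∫ x, log (p x / q x) * p x ∂μ := by
  have heq : (fun x => log (p x / q x) * p x)
      = fun x => klFun (p x / q x) * q x + (p x - q x) := by
    funext x
    have := (hq0 x).ne'
    rw [klFun_apply]
    field_simp
    ring
  have hdiff : Integrable (fun x => p x - q x) μ := hp.sub hq
  rw [heq, integral_add hint hdiff, integral_sub hp hq, hpq, sub_self, add_zero]

end Integration

lemma IsProbDensity.integrable {d : ℕ} {p : (Fin d → ℝ) → ℝ} (hp : IsProbDensity p) :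
    Integrable p :=
  Integrable.of_integral_ne_zero (by rw [hp.2.2]; exact one_ne_zero)

lemma IsProbDensity.one_le_of_le_mul {d : ℕ} {p q : (Fin d → ℝ) → ℝ} {R : ℝ}
    (hp : IsProbDensity p) (hq : IsProbDensity q) (h : ∀ x, p x ≤ R * q x) : 1 ≤ R := by
  have := integral_mono hp.integrable (hq.integrable.const_mul R) h
  rwa [integral_const_mul, hp.2.2, hq.2.2, mul_one] at this

theorem stmt_4_general {d : ℕ} (G : ((Fin d → ℝ) → ℝ) → ℝ)
    (DG : ((Fin d → ℝ) → ℝ) → (Fin d → ℝ) → ℝ)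
    (lam r R : ℝ) (hlam : 0 < lam) (hr : 0 < r)
    (hconv : ∀ p q, IsProbDensity p → IsProbDensity q →
      G p - G q ≤ (∫ x, DG p x * p x) - ∫ x, DG p x * q x)
    (mstar : (Fin d → ℝ) → ℝ) (hmstar : IsProbDensity mstar)
    (hQG : ∀ q, IsProbDensity q →
      G q - G mstar ≥ lam * ∫ x, Real.log (q x / mstar x) * q x)
    (m : (Fin d → ℝ) → ℝ) (hm : IsProbDensity m)
    (hratio : ∀ x, r ≤ m x / mstar x ∧ m x / mstar x ≤ R)
    (hL2 : Integrable (fun x => (DG m x) ^ 2 * m x))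
    (hIDm : Integrable (fun x => DG m x * m x))
    (hIDmstar : Integrable (fun x => DG m x * mstar x)) :
    G m - G mstar ≤ (2 * R / (lam * r)) * ∫ x, (DG m x) ^ 2 * m x := by
  -- `m x / 0 = 0 < r`, so the lower ratio bound forces `mstar x ≠ 0`.
  have hms_pos : ∀ x, 0 < mstar x := fun x => (hmstar.2.1 x).lt_of_ne fun h => by
    have := (hratio x).1
    rw [← h, div_zero] at this
    linarith
  have hR : 1 ≤ R := hm.one_le_of_le_mul hmstar fun x => (div_le_iff₀ (hms_pos x)).1 (hratio x).2
  have hK := integrable_klFun_div_mul hm.1.aestronglyMeasurable hmstar.integrable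
    (fun x => (hms_pos x).le) hr.le hratio
  have hKL := integral_klFun_div_mul_eq hm.integrable hmstar.integrable
    (by rw [hm.2.2, hmstar.2.2]) hms_pos hK
  have hgap : G m - G mstar ≤ R / (lam * r) * (∫ x, (DG m x) ^ 2 * m x)
      + lam / 2 * ∫ x, log (m x / mstar x) * m x :=
    calc G m - G mstar ≤ ∫ x, (DG m x * m x - DG m x * mstar x) := by
          rw [integral_sub hIDm hIDmstar]
          exact hconv m mstar hm hmstar
      _ ≤ ∫ x, (R / (lam * r) * ((DG m x) ^ 2 * m x)
            + lam / 2 * (klFun (m x / mstar x) * mstar x)) :=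
          integral_mono (hIDm.sub hIDmstar) ((hL2.const_mul _).add (hK.const_mul _))
            fun x => mul_sub_mul_le_of_div_mem_Icc hlam hr hR (hms_pos x) (hratio x)
      _ = _ := by
          rw [integral_add (hL2.const_mul _) (hK.const_mul _), integral_const_mul,
            integral_const_mul, hKL]
  have hgrowth := hQG m hm
  have hconst : 2 * R / (lam * r) = 2 * (R / (lam * r)) := by ring
  rw [hconst]
  linarith

/-- flat Polyak–Łojasiewicz inequality from KL quadratic growth:
G(m) − G(m*) ≤ (2R/(λr))·‖δG/δm(m,·)‖²_{L²(m)}. -/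
theorem stmt_4 {d : ℕ} (G : ((Fin d → ℝ) → ℝ) → ℝ)
    (DG : ((Fin d → ℝ) → ℝ) → (Fin d → ℝ) → ℝ)
    (lam r R : ℝ) (hlam : 0 < lam) (hr : 0 < r) (hR : 0 < R)
    (hnorm : ∀ p, IsProbDensity p → ∫ x, DG p x * p x = 0)
    (hconv : ∀ p q, IsProbDensity p → IsProbDensity q →
      G p - G q ≤ (∫ x, DG p x * p x) - ∫ x, DG p x * q x)
    (mstar : (Fin d → ℝ) → ℝ) (hmstar : IsProbDensity mstar)
    (hmin : ∀ q, IsProbDensity q → G mstar ≤ G q)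
    (hQG : ∀ q, IsProbDensity q →
      G q - G mstar ≥ lam * ∫ x, Real.log (q x / mstar x) * q x)
    (m : (Fin d → ℝ) → ℝ) (hm : IsProbDensity m)
    (hratio : ∀ x, r ≤ m x / mstar x ∧ m x / mstar x ≤ R)
    (hL2 : Integrable (fun x => (DG m x) ^ 2 * m x))
    (hIDm : Integrable (fun x => DG m x * m x))
    (hIDmstar : Integrable (fun x => DG m x * mstar x)) :
    G m - G mstar ≤ (2 * R / (lam * r)) * ∫ x, (DG m x) ^ 2 * m x :=
  stmt_4_general G DG lam r R hlam hr hconv mstar hmstar hQG m hm hratio hL2 hIDm hIDmstar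
end

section
/- Let f : ℝ^d → ℝ be differentiable and convex, attaining its minimum at x_p, and suppose the quadratic growth condition f(x) − f(x_p) ≥ (μ/2)‖x − x_p‖² holds for all x with some μ > 0. Then f satisfies a Polyak–Łojasiewicz inequality: there exists κ > 0 (one may take κ = μ/2) such that (1/κ)·‖∇f(x)‖² ≥ f(x) − f(x_p) for all x ∈ ℝ^d. -/
/-!
Convexity gives the first-order bound `a ≤ ⟪∇f x, x - xp⟫ ≤ ‖∇f x‖ r` for `a = f x - f xp` and
`r = ‖x - xp‖`, while quadratic growth says `c r² ≤ a`. Hence `c a² ≤ c ‖∇f x‖² r² ≤ ‖∇f x‖² a`,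
and dividing by `a` gives `c a ≤ ‖∇f x‖²`.
-/

open Set InnerProductSpace

theorem mul_le_sq_of_le_mul_of_mul_sq_le {a b r c : ℝ} (hc : 0 ≤ c) (hab : a ≤ b * r)
    (hgrowth : c * r ^ 2 ≤ a) : c * a ≤ b ^ 2 := by
  have ha : 0 ≤ a := le_trans (by positivity) hgrowth
  rcases ha.eq_or_lt with rfl | ha
  · simpa using sq_nonneg b
  have hsq : a ^ 2 ≤ (b * r) ^ 2 := pow_le_pow_left₀ ha.le hab 2
  have hmul : a * (c * a) ≤ a * b ^ 2 := by
    calc a * (c * a) = c * a ^ 2 := by ring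
      _ ≤ c * (b * r) ^ 2 := mul_le_mul_of_nonneg_left hsq hc
      _ = b ^ 2 * (c * r ^ 2) := by ring
      _ ≤ b ^ 2 * a := mul_le_mul_of_nonneg_left hgrowth (sq_nonneg b)
      _ = a * b ^ 2 := by ring
  exact le_of_mul_le_mul_left hmul ha

section FirstOrder

variable {E : Type*} [NormedAddCommGroup E] [NormedSpace ℝ E] {s : Set E} {f : E → ℝ}

/-- Restrict `f` to the segment from `y` to `x` and compare the chord with the derivative at `x`. -/
theorem ConvexOn.sub_le_of_hasFDerivAt {f' : E →L[ℝ] ℝ} {x y : E} (hf : ConvexOn ℝ s f)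
    (hx : x ∈ s) (hy : y ∈ s) (hf' : HasFDerivAt f f' x) :
    f x - f y ≤ f' (x - y) := by
  let line : ℝ →ᵃ[ℝ] E := AffineMap.lineMap y x
  have hline : ConvexOn ℝ (line ⁻¹' s) (f ∘ line) := hf.comp_affineMap line
  have h0 : (0 : ℝ) ∈ line ⁻¹' s := by simpa [line] using hy
  have h1 : (1 : ℝ) ∈ line ⁻¹' s := by simpa [line] using hx
  have hderiv : HasDerivAt (f ∘ line) (f' (x - y)) 1 := by
    have hx1 : line 1 = x := AffineMap.lineMap_apply_one y x
    exact (hx1 ▸ hf').comp_hasDerivAt 1 AffineMap.hasDerivAt_lineMap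
  simpa [slope, line] using hline.slope_le_of_hasDerivAt h0 h1 one_pos hderiv

end FirstOrder

section Gradient

variable {E : Type*} [NormedAddCommGroup E] [InnerProductSpace ℝ E] [CompleteSpace E]
  {s : Set E} {f : E → ℝ} {g x y : E}

theorem ConvexOn.sub_le_inner_of_hasGradientAt (hf : ConvexOn ℝ s f) (hx : x ∈ s) (hy : y ∈ s)
    (hg : HasGradientAt f g x) : f x - f y ≤ ⟪g, x - y⟫_ℝ := by
  simpa using hf.sub_le_of_hasFDerivAt hx hy hg.hasFDerivAt

theorem ConvexOn.mul_sub_le_norm_sq_of_hasGradientAt {c : ℝ} (hf : ConvexOn ℝ s f)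
    (hx : x ∈ s) (hy : y ∈ s) (hg : HasGradientAt f g x) (hc : 0 ≤ c)
    (hgrowth : c * ‖x - y‖ ^ 2 ≤ f x - f y) : c * (f x - f y) ≤ ‖g‖ ^ 2 :=
  mul_le_sq_of_le_mul_of_mul_sq_le hc
    ((hf.sub_le_inner_of_hasGradientAt hx hy hg).trans (real_inner_le_norm g (x - y))) hgrowth

end Gradient

theorem stmt_8_general {d : ℕ} (f : EuclideanSpace ℝ (Fin d) → ℝ)
    (xp : EuclideanSpace ℝ (Fin d)) (μ : ℝ) (hμ : 0 < μ)
    (hdiff : Differentiable ℝ f)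
    (hconv : ConvexOn ℝ Set.univ f)
    (hQG : ∀ x, f x - f xp ≥ μ / 2 * ‖x - xp‖ ^ 2) :
    ∃ κ > (0:ℝ), κ = μ / 2 ∧
      ∀ x, (1 / κ) * ‖gradient f x‖ ^ 2 ≥ f x - f xp := by
  refine ⟨μ / 2, half_pos hμ, rfl, fun x => ?_⟩
  have hPL : μ / 2 * (f x - f xp) ≤ ‖gradient f x‖ ^ 2 :=
    hconv.mul_sub_le_norm_sq_of_hasGradientAt (mem_univ x) (mem_univ xp)
      (hdiff x).hasGradientAt (half_pos hμ).le (hQG x)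
  rw [ge_iff_le, one_div_mul_eq_div, le_div_iff₀ (half_pos hμ), mul_comm]
  exact hPL

/-- in ℝ^d, convexity plus quadratic growth implies the
Polyak–Łojasiewicz inequality with κ = μ/2. -/
theorem stmt_8 {d : ℕ} (f : EuclideanSpace ℝ (Fin d) → ℝ)
    (xp : EuclideanSpace ℝ (Fin d)) (μ : ℝ) (hμ : 0 < μ)
    (hdiff : Differentiable ℝ f)
    (hconv : ConvexOn ℝ Set.univ f)
    (hmin : ∀ x, f xp ≤ f x)
    (hQG : ∀ x, f x - f xp ≥ μ / 2 * ‖x - xp‖ ^ 2) :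
    ∃ κ > (0:ℝ), κ = μ / 2 ∧
      ∀ x, (1 / κ) * ‖gradient f x‖ ^ 2 ≥ f x - f xp :=
  stmt_8_general f xp μ hμ hdiff hconv hQG
end
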